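/- Let W = {(σ_k)_{k≥1} ∈ {0,1}^ω : for every n ≥ 1 there exists k ≥ 0 with σ_{k+1} = σ_{k+2} = ⋯ = σ_{k+n} = 0} (the runs in which the number of consecutive 0's is unbounded). In the Banach–Mazur game (G_{0,1}, 0, W), Player 0 has a move-counting winning strategy (playing n consecutive 0's at the n-th move), but Player 0 has no positional winning strategy and no bounded winning strategy. -/

import Mathlib

open MeasureTheory
open scoped ENNReal NNReal

namespace BMGame

variable {V : Type*}

/-- The prefix of length `n` of the infinite sequence `ρ`. -/
def pref (ρ : ℕ → V) (n : ℕ) : List V := (List.range n).map ρ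

/-- `ρ` is an infinite path of the graph `E` starting at `v₀`. -/
def IsPlay (E : V → V → Prop) (v₀ : V) (ρ : ℕ → V) : Prop :=
  ρ 0 = v₀ ∧ ∀ n, E (ρ n) (ρ (n + 1))

/-- `π` is a nonempty finite path of the graph `E` starting at `v₀` (a position of the game). -/
def IsPos (E : V → V → Prop) (v₀ : V) (π : List V) : Prop :=
  π.head? = some v₀ ∧ π.Chain' E

/-- A strategy for player 0 assigns to each position the (nonempty) block of vertices
appended by player 0's move; `(π ++ f π).Chain' E` says that this block is a path
starting at the last vertex of `π`. -/
def IsStrategy (E : V → V → Prop) (v₀ : V) (f : List V → List V) : Prop :=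
  ∀ π, IsPos E v₀ π → f π ≠ [] ∧ (π ++ f π).Chain' E

/-- The play `ρ` is consistent with the strategy `f`: there are cut points
`c 0, c 1, …` (the lengths of the prefixes built after each move of player 1) such that
after each such prefix player 0 plays according to `f`, and player 1 then appends a
nonempty block. -/
def ConsGen (f : List V → List V) (ρ : ℕ → V) : Prop :=
  ∃ c : ℕ → ℕ, 1 ≤ c 0 ∧ ∀ i,
    pref ρ (c i + (f (pref ρ (c i))).length) = pref ρ (c i) ++ f (pref ρ (c i)) ∧
    c i + (f (pref ρ (c i))).length < c (i + 1)

/-- `f` is a winning strategy for player 0 in the Banach–Mazur game `(E, v₀, W)`. -/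
def WinningStrategy (E : V → V → Prop) (v₀ : V) (W : Set (ℕ → V))
    (f : List V → List V) : Prop :=
  IsStrategy E v₀ f ∧ ∀ ρ, IsPlay E v₀ ρ → ConsGen f ρ → ρ ∈ W

/-- The strategy `f` is `b`-bounded: each of its moves has length at most `b`. -/
def BoundedBy (E : V → V → Prop) (v₀ : V) (b : ℕ) (f : List V → List V) : Prop :=
  ∀ π, IsPos E v₀ π → (f π).length ≤ b

/-- A positional strategy assigns to each vertex the nonempty block appended. -/
def IsPositional (E : V → V → Prop) (f : V → List V) : Prop :=
  ∀ v, f v ≠ [] ∧ (v :: f v).Chain' E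

/-- Consistency with a positional strategy: after each prefix chosen by player 1,
player 0 plays `f` of the current (last) vertex. -/
def ConsPositional (f : V → List V) (ρ : ℕ → V) : Prop :=
  ∃ c : ℕ → ℕ, 1 ≤ c 0 ∧ ∀ i,
    pref ρ (c i + (f (ρ (c i - 1))).length) = pref ρ (c i) ++ f (ρ (c i - 1)) ∧
    c i + (f (ρ (c i - 1))).length < c (i + 1)

def PositionalWinning (E : V → V → Prop) (v₀ : V) (W : Set (ℕ → V)) (f : V → List V) : Prop :=
  IsPositional E f ∧ ∀ ρ, IsPlay E v₀ ρ → ConsPositional f ρ → ρ ∈ W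

/-- Structural requirement shared by move-counting and length-counting strategies:
for `n ≥ 1`, `h v n` is a nonempty block forming a path from `v`. -/
def IsCountingStrategy (E : V → V → Prop) (h : V → ℕ → List V) : Prop :=
  ∀ v n, 1 ≤ n → h v n ≠ [] ∧ (v :: h v n).Chain' E

/-- Consistency with a move-counting strategy: at its `i`-th move (`i ≥ 1`) player 0 plays
`h (current vertex) i`. -/
def ConsMoveCounting (h : V → ℕ → List V) (ρ : ℕ → V) : Prop :=
  ∃ c : ℕ → ℕ, 1 ≤ c 0 ∧ ∀ i,
    pref ρ (c i + (h (ρ (c i - 1)) (i + 1)).length) = pref ρ (c i) ++ h (ρ (c i - 1)) (i + 1) ∧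
    c i + (h (ρ (c i - 1)) (i + 1)).length < c (i + 1)

def MoveCountingWinning (E : V → V → Prop) (v₀ : V) (W : Set (ℕ → V))
    (h : V → ℕ → List V) : Prop :=
  IsCountingStrategy E h ∧ ∀ ρ, IsPlay E v₀ ρ → ConsMoveCounting h ρ → ρ ∈ W

/-- Consistency with a length-counting strategy: after a prefix of length `c i`
player 0 plays `h (current vertex) (c i)`. -/
def ConsLengthCounting (h : V → ℕ → List V) (ρ : ℕ → V) : Prop :=
  ∃ c : ℕ → ℕ, 1 ≤ c 0 ∧ ∀ i,
    pref ρ (c i + (h (ρ (c i - 1)) (c i)).length) = pref ρ (c i) ++ h (ρ (c i - 1)) (c i) ∧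
    c i + (h (ρ (c i - 1)) (c i)).length < c (i + 1)

def LengthCountingWinning (E : V → V → Prop) (v₀ : V) (W : Set (ℕ → V))
    (h : V → ℕ → List V) : Prop :=
  IsCountingStrategy E h ∧ ∀ ρ, IsPlay E v₀ ρ → ConsLengthCounting h ρ → ρ ∈ W

/-- The segment `ρ a, ρ (a+1), …, ρ (b-1)` of an infinite sequence. -/
def seg (ρ : ℕ → V) (a b : ℕ) : List V := (List.range (b - a)).map fun j => ρ (a + j)

/-- A last-move strategy is defined on all nonempty finite paths of the graph. -/
def IsLastMove (E : V → V → Prop) (g : List V → List V) : Prop :=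
  ∀ π, π ≠ [] → π.Chain' E → g π ≠ [] ∧ (π ++ g π).Chain' E

/-- Consistency with the last-move strategy `g`: the play decomposes as
`π₁ g(π₁) π₂ g(π₂) ⋯` where the `πᵢ` are the (nonempty) moves of player 1. -/
def ConsLastMove (g : List V → List V) (ρ : ℕ → V) : Prop :=
  ∃ s e : ℕ → ℕ, s 0 = 0 ∧ (∀ i, s i < e i) ∧ ∀ i,
    seg ρ (e i) (e i + (g (seg ρ (s i) (e i))).length) = g (seg ρ (s i) (e i)) ∧
    s (i + 1) = e i + (g (seg ρ (s i) (e i))).length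

def LastMoveWinning (E : V → V → Prop) (v₀ : V) (W : Set (ℕ → V)) (g : List V → List V) : Prop :=
  IsLastMove E g ∧ ∀ ρ, IsPlay E v₀ ρ → ConsLastMove g ρ → ρ ∈ W

/-- The cylinder generated by the finite word `π`. -/
def Cyl (π : List V) : Set (ℕ → V) := {ρ | pref ρ π.length = π}

/-- One-step transition probabilities obtained from the weights `w`. -/
noncomputable def transP [Fintype V] (E : V → V → Prop) (w : V → V → ℝ≥0) (u v : V) : ℝ≥0∞ := by
  classical
  exact if E u v then
    (w u v : ℝ≥0∞) / ∑ x ∈ Finset.univ.filter (fun x => E u x), (w u x : ℝ≥0∞)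
  else 0

/-- The probability of the cylinder generated by a finite word: the product of the
one-step transition probabilities along it. -/
noncomputable def pathP [Fintype V] (E : V → V → Prop) (w : V → V → ℝ≥0) (π : List V) : ℝ≥0∞ :=
  ((π.zip π.tail).map fun q => transP E w q.1 q.2).prod

/-- `P` is the reasonable probability measure associated with the weights `w`. -/
def IsReasonable [Fintype V] [MeasurableSpace (ℕ → V)] (E : V → V → Prop) (v₀ : V)
    (w : V → V → ℝ≥0) (P : Measure (ℕ → V)) : Prop :=
  IsProbabilityMeasure P ∧ ∀ π : List V, π.head? = some v₀ → P (Cyl π) = pathP E w π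

/-- `Ps` is a legal move of player 0 in the generalised game `G_α` at position `π`: a
finite nonempty set of nonempty finite paths from the last vertex of `π` whose union of
cylinders has conditional probability at least `α` given `Cyl π`. -/
def LegalProposal [MeasurableSpace (ℕ → V)] (E : V → V → Prop) (P : Measure (ℕ → V)) (α : ℝ)
    (π : List V) (Ps : Finset (List V)) : Prop :=
  Ps.Nonempty ∧ (∀ τ ∈ Ps, τ ≠ [] ∧ (π ++ τ).Chain' E) ∧
    ENNReal.ofReal α ≤ P (⋃ τ ∈ Ps, Cyl (π ++ τ)) / P (Cyl π)

/-- An α-strategy for player 0. -/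
def IsAlphaStrategy [MeasurableSpace (ℕ → V)] (E : V → V → Prop) (v₀ : V) (P : Measure (ℕ → V))
    (α : ℝ) (f : List V → Finset (List V)) : Prop :=
  ∀ π, IsPos E v₀ π → LegalProposal E P α π (f π)

/-- Consistency with an α-strategy: at each stage, player 1 picks some element of the
set proposed by player 0 and appends a nonempty block after it. -/
def ConsAlpha (f : List V → Finset (List V)) (ρ : ℕ → V) : Prop :=
  ∃ c : ℕ → ℕ, 1 ≤ c 0 ∧ ∀ i, ∃ τ ∈ f (pref ρ (c i)),
    pref ρ (c i + τ.length) = pref ρ (c i) ++ τ ∧ c i + τ.length < c (i + 1)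

def AlphaWinning [MeasurableSpace (ℕ → V)] (E : V → V → Prop) (v₀ : V) (P : Measure (ℕ → V))
    (α : ℝ) (W : Set (ℕ → V)) (f : List V → Finset (List V)) : Prop :=
  IsAlphaStrategy E v₀ P α f ∧ ∀ ρ, IsPlay E v₀ ρ → ConsAlpha f ρ → ρ ∈ W

/-- A strategy for player 1 in the generalised game `G_α` consists of an initial path and,
for each position together with a legal proposal of player 0, the selected element of the
proposal and the next (nonempty) block played by player 1. -/
def IsP1Strategy [MeasurableSpace (ℕ → V)] (E : V → V → Prop) (v₀ : V) (P : Measure (ℕ → V))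
    (α : ℝ) (init : List V) (g : List V → Finset (List V) → List V × List V) : Prop :=
  IsPos E v₀ init ∧
    ∀ π Ps, IsPos E v₀ π → LegalProposal E P α π Ps →
      (g π Ps).1 ∈ Ps ∧ (g π Ps).2 ≠ [] ∧ (π ++ ((g π Ps).1 ++ (g π Ps).2)).Chain' E

/-- Consistency of a play with player 1's strategy `(init, g)`:
there is a sequence of legal proposals of player 0 generating the play. -/
def ConsP1 [MeasurableSpace (ℕ → V)] (E : V → V → Prop) (P : Measure (ℕ → V)) (α : ℝ)
    (init : List V) (g : List V → Finset (List V) → List V × List V) (ρ : ℕ → V) : Prop :=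
  ∃ (Ps : ℕ → Finset (List V)) (p : ℕ → List V), p 0 = init ∧
    (∀ n, pref ρ (p n).length = p n) ∧
    ∀ n, LegalProposal E P α (p n) (Ps n) ∧
      p (n + 1) = p n ++ ((g (p n) (Ps n)).1 ++ (g (p n) (Ps n)).2)

def P1Winning [MeasurableSpace (ℕ → V)] (E : V → V → Prop) (v₀ : V) (P : Measure (ℕ → V))
    (α : ℝ) (W : Set (ℕ → V)) (init : List V)
    (g : List V → Finset (List V) → List V × List V) : Prop :=
  IsP1Strategy E v₀ P α init g ∧ ∀ ρ, IsPlay E v₀ ρ → ConsP1 E P α init g ρ → ρ ∉ W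

/-- A union of cylinders, i.e. an open subset of the space of sequences. -/
def IsCylOpen (U : Set (ℕ → V)) : Prop :=
  ∃ S : Set (List V), U = ⋃ π ∈ S, Cyl π

/-- `W` is a countable intersection of open subsets of the space `Paths (G, v₀)`. -/
def IsCountableInterOfOpens (E : V → V → Prop) (v₀ : V) (W : Set (ℕ → V)) : Prop :=
  ∃ U : ℕ → Set (ℕ → V), (∀ n, IsCylOpen (U n)) ∧
    W = {ρ | IsPlay E v₀ ρ} ∩ ⋂ n, U n

/-- For every `n`, the concatenation of the blocks `u 0, …, u (n-1)` is a prefix of `ρ`. -/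
def AgreesWithBlocks (ρ : ℕ → V) (u : ℕ → List V) : Prop :=
  ∀ n, pref ρ (((List.range n).map u).flatten).length = ((List.range n).map u).flatten

end BMGame

open BMGame

/-- The complete directed graph on `{0,1}` (all edges, including self-loops). -/
def E2 : Fin 2 → Fin 2 → Prop := fun _ _ => True

/-- The set of sequences over `{0,1}` in which the number of consecutive `0`'s is
unbounded: for every `n ≥ 1` there is `k ≥ 0` with `σ_{k+1} = ⋯ = σ_{k+n} = 0`
(sequences are `0`-indexed, `σ_i = ρ (i - 1)`). -/
def W9 : Set (ℕ → Fin 2) :=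
  {ρ | ∀ n : ℕ, 1 ≤ n → ∃ k : ℕ, ∀ i, i < n → ρ (k + i) = 0}

/-!
Against the move-counting strategy, whose `n`-th move is a block of `n` zeros, every play contains
arbitrarily long runs of zeros. Against a strategy whose moves have length at most `b`, Player 1
opens with `0` and answers every move with a single `1`; then the `1`'s are at most `b + 1` apart,
so no run of zeros is longer than `b`. A positional winning strategy yields a bounded winning
strategy: play the positional move of the last vertex of the position.
-/

namespace BMGame

variable {V : Type*}

section Prefixes

@[simp]
lemma length_pref (ρ : ℕ → V) (n : ℕ) : (pref ρ n).length = n := by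
  simp [pref]

@[simp]
lemma getElem_pref (ρ : ℕ → V) {n k : ℕ} (h : k < (pref ρ n).length) : (pref ρ n)[k] = ρ k := by
  simp [pref]

lemma pref_add (ρ : ℕ → V) (m n : ℕ) : pref ρ (m + n) = pref ρ m ++ seg ρ m (m + n) := by
  simp [pref, seg, List.range_add]

lemma pref_add_length_eq_append_iff {ρ : ℕ → V} {m : ℕ} {l : List V} :
    pref ρ (m + l.length) = pref ρ m ++ l ↔ seg ρ m (m + l.length) = l := by
  rw [pref_add, List.append_cancel_left_eq]

lemma take_pref (ρ : ℕ → V) {m n : ℕ} (h : m ≤ n) : (pref ρ n).take m = pref ρ m := by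
  simp [pref, ← List.map_take, List.take_range, Nat.min_eq_left h]

lemma pref_length_eq_of_prefix {ρ : ℕ → V} {l l' : List V} (hl : pref ρ l.length = l)
    (h : l' <+: l) : pref ρ l'.length = l' := by
  rw [← take_pref ρ h.length_le, hl, ← List.prefix_iff_eq_take.mp h]

lemma getLast?_pref (ρ : ℕ → V) {n : ℕ} (hn : 1 ≤ n) : (pref ρ n).getLast? = some (ρ (n - 1)) := by
  simp [pref, List.getLast?_map, List.getLast?_range, Nat.pos_iff_ne_zero.mp hn]

lemma IsPlay.isPos_pref {E : V → V → Prop} {v₀ : V} {ρ : ℕ → V} (hρ : IsPlay E v₀ ρ) {n : ℕ}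
    (hn : 1 ≤ n) : IsPos E v₀ (pref ρ n) := by
  obtain ⟨m, rfl⟩ := Nat.exists_eq_add_of_le' hn
  refine ⟨by simp [pref, List.range_succ_eq_map, hρ.1], ?_⟩
  exact (List.isChain_map ρ).mpr ((List.isChain_range_succ _ m).mpr fun k _ => hρ.2 k)

end Prefixes

section LimitPlay

variable [Inhabited V]

def limitOf (q : ℕ → List V) (n : ℕ) : V := (q (n + 1)).getD n default

lemma pref_limitOf {q : ℕ → List V} (hq : ∀ i, q i <+: q (i + 1))
    (hlen : ∀ i, i < (q i).length) (i : ℕ) : pref (limitOf q) (q i).length = q i := by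
  have hmono := Nat.rel_of_forall_rel_succ_of_le (· <+: ·) hq
  refine List.ext_getElem (length_pref _ _) fun k hk hki => ?_
  have hk1 := hlen (k + 1)
  rw [getElem_pref, limitOf, List.getD_eq_getElem _ _ (by omega)]
  rcases Nat.le_total (k + 1) i with h | h
  · exact (hmono h).getElem _
  · exact ((hmono h).getElem hki).symm

end LimitPlay

section ConstantAnswer

variable (f : List V → List V) (init r : List V)

/-- The positions reached when Player 1 opens with `init` and answers every move of Player 0
(who follows `f`) with the block `r`. -/
def constAnswerPos : ℕ → List V
  | 0 => init
  | i + 1 => constAnswerPos i ++ f (constAnswerPos i) ++ r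

def constAnswerPlay [Inhabited V] : ℕ → V := limitOf (constAnswerPos f init r)

variable {f init r}

lemma length_constAnswerPos_succ (i : ℕ) :
    (constAnswerPos f init r (i + 1)).length =
      (constAnswerPos f init r i).length + (f (constAnswerPos f init r i)).length + r.length := by
  simp [constAnswerPos, Nat.add_assoc]

variable (hinit : init ≠ []) (hr : r ≠ [])
include hinit hr

lemma lt_length_constAnswerPos (i : ℕ) : i < (constAnswerPos f init r i).length := by
  induction i with
  | zero => exact List.length_pos_iff.mpr hinit
  | succ i ih =>
    have := List.length_pos_iff.mpr hr
    rw [length_constAnswerPos_succ]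
    omega

variable [Inhabited V]

lemma pref_constAnswerPlay (i : ℕ) :
    pref (constAnswerPlay f init r) (constAnswerPos f init r i).length = constAnswerPos f init r i := by
  refine pref_limitOf (fun i => ?_) (lt_length_constAnswerPos hinit hr) i
  rw [constAnswerPos, List.append_assoc]
  exact List.prefix_append _ _

lemma consGen_constAnswerPlay : ConsGen f (constAnswerPlay f init r) := by
  refine ⟨fun i => (constAnswerPos f init r i).length, List.length_pos_iff.mpr hinit, fun i => ?_⟩
  have hpos := pref_constAnswerPlay (f := f) hinit hr i
  dsimp only
  refine ⟨?_, ?_⟩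
  · rw [hpos, ← List.length_append]
    exact pref_length_eq_of_prefix (pref_constAnswerPlay hinit hr (i + 1))
      (List.prefix_append _ _)
  · have := List.length_pos_iff.mpr hr
    rw [hpos, length_constAnswerPos_succ]
    omega

lemma seg_constAnswerPlay (i : ℕ) :
    let move := constAnswerPos f init r i ++ f (constAnswerPos f init r i)
    seg (constAnswerPlay f init r) move.length (move.length + r.length) = r := by
  intro move
  have h : pref (constAnswerPlay f init r) (move ++ r).length = move ++ r :=
    pref_constAnswerPlay hinit hr (i + 1)
  have hmove := pref_length_eq_of_prefix h (List.prefix_append _ _)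
  rw [List.length_append] at h
  exact pref_add_length_eq_append_iff.mp (by rw [hmove]; exact h)

end ConstantAnswer

section Positional

variable {E : V → V → Prop} {v₀ : V} {f : V → List V}

def ofPositional (v₀ : V) (f : V → List V) (π : List V) : List V := f (π.getLastD v₀)

lemma IsPositional.isStrategy_ofPositional (hf : IsPositional E f) :
    IsStrategy E v₀ (ofPositional v₀ f) := by
  intro π hπ
  obtain ⟨hne, hchain⟩ := hf (π.getLastD v₀)
  refine ⟨hne, List.isChain_append.mpr ⟨hπ.2, (List.isChain_cons.mp hchain).2, ?_⟩⟩
  intro x hx y hy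
  have hlast : π.getLastD v₀ = x := by simp [List.getLastD_eq_getLast?, Option.mem_def.mp hx]
  exact hlast ▸ (List.isChain_cons.mp hchain).1 y hy

lemma ConsGen.consPositional {ρ : ℕ → V} (h : ConsGen (ofPositional v₀ f) ρ) :
    ConsPositional f ρ := by
  obtain ⟨c, hc0, hc⟩ := h
  have hc1 : ∀ i, 1 ≤ c i := fun i => by
    induction i with
    | zero => exact hc0
    | succ i ih => have := (hc i).2; omega
  have hmove : ∀ i, ofPositional v₀ f (pref ρ (c i)) = f (ρ (c i - 1)) := fun i => by
    simp [ofPositional, List.getLastD_eq_getLast?, getLast?_pref ρ (hc1 i)]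
  exact ⟨c, hc0, fun i => by simpa only [hmove] using hc i⟩

lemma PositionalWinning.winningStrategy_ofPositional {W : Set (ℕ → V)}
    (hf : PositionalWinning E v₀ W f) : WinningStrategy E v₀ W (ofPositional v₀ f) :=
  ⟨hf.1.isStrategy_ofPositional, fun ρ hρ hcons => hf.2 ρ hρ hcons.consPositional⟩

lemma boundedBy_ofPositional [Fintype V] :
    BoundedBy E v₀ (Finset.univ.sup fun v => (f v).length) (ofPositional v₀ f) :=
  fun _ _ => Finset.le_sup (f := fun v => (f v).length) (Finset.mem_univ _)

end Positional

end BMGame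

open BMGame

lemma exists_mem_Icc_of_strictMono {a : ℕ → ℕ} {s : ℕ} (ha : StrictMono a) (h0 : a 0 ≤ s)
    (hstep : ∀ i, a (i + 1) ≤ a i + s) (k : ℕ) : ∃ i, a i ∈ Set.Icc k (k + s) := by
  classical
  have hex : ∃ i, k ≤ a i := ⟨k, ha.id_le k⟩
  refine ⟨Nat.find hex, Nat.find_spec hex, ?_⟩
  rcases h : Nat.find hex with _ | i
  · omega
  · have := Nat.find_min hex (show i < Nat.find hex by omega)
    have := hstep i
    omega

lemma notMem_W9_of_forall_exists_ne_zero {ρ : ℕ → Fin 2} (s : ℕ)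
    (h : ∀ k, ∃ j ∈ Set.Icc k (k + s), ρ j ≠ 0) : ρ ∉ W9 := by
  intro hW
  obtain ⟨k, hk⟩ := hW (s + 1) (by omega)
  obtain ⟨j, ⟨hkj, hjs⟩, hj⟩ := h k
  exact hj (by simpa [Nat.add_sub_cancel' hkj] using hk (j - k) (by omega))

lemma replicate_moveCountingWinning :
    MoveCountingWinning E2 0 W9 (fun _ n => List.replicate n 0) := by
  refine ⟨fun _ n hn => ⟨List.length_pos_iff.mp (by simpa using Nat.lt_of_succ_le hn), List.isChain_iff_getElem.mpr fun _ _ => trivial⟩, ?_⟩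
  rintro ρ - ⟨c, -, hc⟩ n hn
  obtain ⟨m, rfl⟩ := Nat.exists_eq_add_of_le' hn
  have hmove := (hc m).1
  dsimp only at hmove
  have hzeros := pref_add_length_eq_append_iff.mp hmove
  simp only [seg, List.length_replicate, Nat.add_sub_cancel_left, List.eq_replicate_iff,
    List.length_map, List.length_range, List.mem_map, List.mem_range, true_and] at hzeros
  exact ⟨c m, fun j hj => hzeros _ ⟨j, hj, rfl⟩⟩

lemma not_winningStrategy_W9_of_boundedBy {f : List (Fin 2) → List (Fin 2)} {b : ℕ}
    (hb : BoundedBy E2 0 b f) : ¬ WinningStrategy E2 0 W9 f := by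
  intro hwin
  have hinit : [(0 : Fin 2)] ≠ [] := List.cons_ne_nil _ _
  have hr : [(1 : Fin 2)] ≠ [] := List.cons_ne_nil _ _
  set q := constAnswerPos f [0] [1]
  set ρ := constAnswerPlay f [0] [1]
  have hplay : IsPlay E2 0 ρ := by
    refine ⟨?_, fun _ => trivial⟩
    simpa [pref, q, constAnswerPos] using pref_constAnswerPlay (f := f) hinit hr 0
  have hmove : ∀ i, (f (q i)).length ≤ b := fun i =>
    have hpos := hplay.isPos_pref (Nat.one_le_of_lt (lt_length_constAnswerPos hinit hr i))
    hb _ (by rwa [pref_constAnswerPlay hinit hr] at hpos)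
  set a : ℕ → ℕ := fun i => (q i).length + (f (q i)).length
  have hone : ∀ i, ρ (a i) = 1 := fun i => by
    simpa [seg] using seg_constAnswerPlay (f := f) hinit hr i
  have hstep : ∀ i, a (i + 1) = a i + 1 + (f (q (i + 1))).length := fun i => by
    simp [a, q, length_constAnswerPos_succ]
  refine notMem_W9_of_forall_exists_ne_zero (b + 1) (fun k => ?_)
    (hwin.2 ρ hplay (consGen_constAnswerPlay hinit hr))
  obtain ⟨i, hi⟩ := exists_mem_Icc_of_strictMono (a := a) (s := b + 1)
    (strictMono_nat_of_lt_succ fun i => by rw [hstep]; omega)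
    (by have := hmove 0; simp only [a, q, constAnswerPos, List.length_singleton] at this ⊢; omega)
    (fun i => by have := hmove (i + 1); rw [hstep]; omega) k
  exact ⟨a i, hi, by rw [hone]; decide⟩

/-- In the game `(G_{0,1}, 0, W9)`, Player 0 has a move-counting winning strategy,
but no positional winning strategy and no bounded winning strategy. -/
theorem stmt9 :
    (∃ h : Fin 2 → ℕ → List (Fin 2), MoveCountingWinning E2 0 W9 h) ∧
    (¬ ∃ f : Fin 2 → List (Fin 2), PositionalWinning E2 0 W9 f) ∧
    (¬ ∃ (f : List (Fin 2) → List (Fin 2)) (b : ℕ), 1 ≤ b ∧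
        WinningStrategy E2 0 W9 f ∧ BoundedBy E2 0 b f) := by
  refine ⟨⟨_, replicate_moveCountingWinning⟩, ?_, ?_⟩
  · rintro ⟨f, hf⟩
    exact not_winningStrategy_W9_of_boundedBy boundedBy_ofPositional
      hf.winningStrategy_ofPositional
  · rintro ⟨f, b, -, hwin, hb⟩
    exact not_winningStrategy_W9_of_boundedBy hb hwin
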